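/- Let m₁, m₂ ≥ 1. Let t, t' ∈ ℝ^{m₁} have non-negative coordinates summing to 1, let s, s' ∈ ℝ^{m₂} have non-negative coordinates summing to 1, and let λ, λ' ∈ [1/2, 1]. Then Σ_{i=1}^{m₁} |λ t_i − λ' t'_i| + Σ_{j=1}^{m₂} |(1−λ) s_j − (1−λ') s'_j| ≥ |λ − λ'|, and Σ_{i=1}^{m₁} |λ t_i − λ' t'_i| + Σ_{j=1}^{m₂} |(1−λ) s_j − (1−λ') s'_j| ≥ (1/(6 m₁)) Σ_{i=1}^{m₁} |t_i − t'_i|. -/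

import Mathlib

/-!
Both bounds already hold with the first block of coordinates alone. Since `t` and `t'` sum to one,
`λ - λ' = ∑ (λ tᵢ - λ' t'ᵢ)`, which gives the first bound by the triangle inequality.
Writing `λ (tᵢ - t'ᵢ) = (λ tᵢ - λ' t'ᵢ) - (λ - λ') t'ᵢ` and summing gives
`λ ∑ |tᵢ - t'ᵢ| ≤ A + |λ - λ'| ≤ 2A`, where `A = ∑ |λ tᵢ - λ' t'ᵢ|`; with `λ ≥ 1/2` this is
`∑ |tᵢ - t'ᵢ| ≤ 4A`, and `1/(6m₁) ≤ 1/4`.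
-/

open Finset

section WeightedSums

variable {ι : Type*} [Fintype ι]

theorem abs_sub_le_sum_abs_mul_sub_mul {t t' : ι → ℝ} (ht : ∑ i, t i = 1) (ht' : ∑ i, t' i = 1)
    (a b : ℝ) : |a - b| ≤ ∑ i, |a * t i - b * t' i| := by
  have hsum : a - b = ∑ i, (a * t i - b * t' i) := by
    rw [sum_sub_distrib, ← mul_sum, ← mul_sum, ht, ht', mul_one, mul_one]
  rw [hsum]
  exact abs_sum_le_sum_abs _ _

theorem mul_abs_sub_le_abs_mul_sub_mul {a b x y : ℝ} (ha : 0 ≤ a) (hy : 0 ≤ y) :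
    a * |x - y| ≤ |a * x - b * y| + |a - b| * y :=
  calc a * |x - y| = |a * (x - y)| := by rw [abs_mul, abs_of_nonneg ha]
    _ = |(a * x - b * y) - (a - b) * y| := by ring_nf
    _ ≤ |a * x - b * y| + |(a - b) * y| := abs_sub _ _
    _ = |a * x - b * y| + |a - b| * y := by rw [abs_mul, abs_of_nonneg hy]

theorem mul_sum_abs_sub_le {t t' : ι → ℝ} (ht' : ∀ i, 0 ≤ t' i) (ht's : ∑ i, t' i = 1)
    {a : ℝ} (ha : 0 ≤ a) (b : ℝ) :
    a * ∑ i, |t i - t' i| ≤ ∑ i, |a * t i - b * t' i| + |a - b| :=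
  calc a * ∑ i, |t i - t' i| = ∑ i, a * |t i - t' i| := mul_sum _ _ _
    _ ≤ ∑ i, (|a * t i - b * t' i| + |a - b| * t' i) :=
        sum_le_sum fun i _ => mul_abs_sub_le_abs_mul_sub_mul ha (ht' i)
    _ = ∑ i, |a * t i - b * t' i| + |a - b| := by
        rw [sum_add_distrib, ← mul_sum, ht's, mul_one]

theorem sum_abs_sub_le_four_mul_sum_abs_mul_sub_mul {t t' : ι → ℝ} (ht' : ∀ i, 0 ≤ t' i)
    (hts : ∑ i, t i = 1) (ht's : ∑ i, t' i = 1) {a : ℝ} (ha : 1 / 2 ≤ a) (b : ℝ) :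
    ∑ i, |t i - t' i| ≤ 4 * ∑ i, |a * t i - b * t' i| := by
  have hmul := mul_sum_abs_sub_le ht' ht's (t := t) (by linarith : 0 ≤ a) b
  have hab := abs_sub_le_sum_abs_mul_sub_mul hts ht's a b
  have hhalf : 1 / 2 * ∑ i, |t i - t' i| ≤ a * ∑ i, |t i - t' i| :=
    mul_le_mul_of_nonneg_right ha (sum_nonneg fun i _ => abs_nonneg _)
  linarith

end WeightedSums

theorem one_div_six_mul_natCast_le (n : ℕ) : 1 / (6 * (n : ℝ)) ≤ 1 / 4 := by
  rcases Nat.eq_zero_or_pos n with rfl | hn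
  · norm_num
  · have : (1 : ℝ) ≤ n := by exact_mod_cast hn
    rw [div_le_div_iff₀ (by linarith) (by norm_num)]
    linarith

theorem stmt18_general (m₁ m₂ : ℕ)
    (t t' : Fin m₁ → ℝ) (s s' : Fin m₂ → ℝ)
    (ht' : ∀ i, 0 ≤ t' i)
    (hts : ∑ i, t i = 1) (ht's : ∑ i, t' i = 1)
    (lam lam' : ℝ) (hlam : lam ∈ Set.Icc (1 / 2 : ℝ) 1) :
    |lam - lam'| ≤
        (∑ i, |lam * t i - lam' * t' i|) + ∑ j, |(1 - lam) * s j - (1 - lam') * s' j| ∧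
      (1 / (6 * (m₁ : ℝ))) * ∑ i, |t i - t' i| ≤
        (∑ i, |lam * t i - lam' * t' i|) + ∑ j, |(1 - lam) * s j - (1 - lam') * s' j| := by
  set A := ∑ i, |lam * t i - lam' * t' i|
  have hB : 0 ≤ ∑ j, |(1 - lam) * s j - (1 - lam') * s' j| := sum_nonneg fun j _ => abs_nonneg _
  have hA : A ≤ A + ∑ j, |(1 - lam) * s j - (1 - lam') * s' j| := le_add_of_nonneg_right hB
  refine ⟨(abs_sub_le_sum_abs_mul_sub_mul hts ht's lam lam').trans hA, ?_⟩
  have hfour := sum_abs_sub_le_four_mul_sum_abs_mul_sub_mul ht' hts ht's hlam.1 lam'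
  calc 1 / (6 * (m₁ : ℝ)) * ∑ i, |t i - t' i| ≤ 1 / 4 * ∑ i, |t i - t' i| :=
        mul_le_mul_of_nonneg_right (one_div_six_mul_natCast_le m₁)
          (sum_nonneg fun i _ => abs_nonneg _)
    _ ≤ A := by linarith
    _ ≤ _ := hA

/-- ℓ¹-distance estimates for joins of simplices. -/
theorem stmt18 (m₁ m₂ : ℕ) (hm₁ : 1 ≤ m₁) (hm₂ : 1 ≤ m₂)
    (t t' : Fin m₁ → ℝ) (s s' : Fin m₂ → ℝ)
    (ht : ∀ i, 0 ≤ t i) (ht' : ∀ i, 0 ≤ t' i)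
    (hs : ∀ j, 0 ≤ s j) (hs' : ∀ j, 0 ≤ s' j)
    (hts : ∑ i, t i = 1) (ht's : ∑ i, t' i = 1)
    (hss : ∑ j, s j = 1) (hs's : ∑ j, s' j = 1)
    (lam lam' : ℝ) (hlam : lam ∈ Set.Icc (1 / 2 : ℝ) 1) (hlam' : lam' ∈ Set.Icc (1 / 2 : ℝ) 1) :
    |lam - lam'| ≤
        (∑ i, |lam * t i - lam' * t' i|) + ∑ j, |(1 - lam) * s j - (1 - lam') * s' j| ∧
      (1 / (6 * (m₁ : ℝ))) * ∑ i, |t i - t' i| ≤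
        (∑ i, |lam * t i - lam' * t' i|) + ∑ j, |(1 - lam) * s j - (1 - lam') * s' j| :=
  stmt18_general m₁ m₂ t t' s s' ht' hts ht's lam lam' hlam
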